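/- arXiv:1601.06064 — 3 statements merged into one kernel-verified Lean document; each statement's English description precedes it below -/
import Mathlib

section
/- For every real m ≥ 2 and every z ∈ Δ_K, the generator applied to the power sum φ_m satisfies the identity B_K φ_m(z) = (m(m−1)/2)(φ_{m−1}(z) − φ_m(z)) + (m/2)·((θ+α)/(K−1))·(φ_{m−1}(z) − φ_m(z)) − (m/2)(θ φ_m(z) + α φ_{m−1}(z)) + (m/2)·α·∑_{i=1}^K (1−z_i)^K z_i^{m−1}·(1 − z_i + (∑_{j=1}^K z_j r_j(z))/(∑_{l=1}^K (1−z_l)^K)). -/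
open Finset

/-- The function `r(u)`: `r(u) = (1-u)(1-(1-u)^K)/u` for `u > 0`, `r(0) = K`. -/
noncomputable def rfun (K : ℕ) (u : ℝ) : ℝ :=
  if u = 0 then (K : ℝ) else (1 - u) * (1 - (1 - u) ^ K) / u

/-- The simplex `Δ_K`. -/
def DeltaK (K : ℕ) : Set (Fin K → ℝ) :=
  {z | (∀ i, 0 ≤ z i) ∧ ∑ i, z i = 1}

/-- The ordered simplex `∇_K`. -/
def NablaK (K : ℕ) : Set (Fin K → ℝ) :=
  {z | z ∈ DeltaK K ∧ ∀ i j : Fin K, i ≤ j → z j ≤ z i}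

/-- The mainland frequencies `p_i(z)`. -/
noncomputable def pfun (K : ℕ) (z : Fin K → ℝ) (i : Fin K) : ℝ :=
  (1 - z i) ^ K / ∑ l, (1 - z l) ^ K

/-- The drift coefficients `b_i(z)`. -/
noncomputable def bdrift (K : ℕ) (α θ : ℝ) (z : Fin K → ℝ) (i : Fin K) : ℝ :=
  (1 / 2) * ((θ + α) * (1 - z i) / ((K : ℝ) - 1) - (θ + α) * z i
    + α * pfun K z i * (∑ j, z j * rfun K (z j)) - α * z i * rfun K (z i))

/-- The power sum `φ_m(z) = ∑_{i=1}^K z_i^m` (real exponent). -/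
noncomputable def phiK (K : ℕ) (m : ℝ) (z : Fin K → ℝ) : ℝ := ∑ i, z i ^ m

/-- The generator applied to the power sum `φ_m`:
`B_K φ_m(z) = (m(m-1)/2) ∑ z_i^{m-1}(1-z_i) + m ∑ b_i(z) z_i^{m-1}`. -/
noncomputable def BKphi (K : ℕ) (α θ : ℝ) (m : ℝ) (z : Fin K → ℝ) : ℝ :=
  (m * (m - 1) / 2) * ∑ i, z i ^ (m - 1) * (1 - z i)
    + m * ∑ i, bdrift K α θ z i * z i ^ (m - 1)

/-!
The identity holds summand by summand. After expanding `b_i`, the `θ`-terms and the terms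
containing `∑ⱼ zⱼ rⱼ(z)` match directly, and what is left is a multiple of
`α zᵢ^{m-1} (1 - zᵢ - zᵢ rᵢ(z) - (1 - zᵢ)^{K+1})`, which vanishes because
`u r(u) = (1 - u)(1 - (1 - u)^K)` for every `u`, including `u = 0`.
-/

lemma mul_rfun (K : ℕ) (u : ℝ) : u * rfun K u = (1 - u) * (1 - (1 - u) ^ K) := by
  rw [rfun]
  split_ifs with hu
  · simp [hu]
  · field_simp

theorem stmt5_general (K : ℕ) (α θ : ℝ) :
    ∀ (m : ℝ), 2 ≤ m → ∀ z ∈ DeltaK K,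
      BKphi K α θ m z =
        (m * (m - 1) / 2) * (phiK K (m - 1) z - phiK K m z)
          + (m / 2) * ((θ + α) / ((K : ℝ) - 1)) * (phiK K (m - 1) z - phiK K m z)
          - (m / 2) * (θ * phiK K m z + α * phiK K (m - 1) z)
          + (m / 2) * α * ∑ i, (1 - z i) ^ K * z i ^ (m - 1) *
              (1 - z i + (∑ j, z j * rfun K (z j)) / (∑ l, (1 - z l) ^ K)) := by
  intro m hm z hz
  rw [← sub_eq_zero]
  simp only [BKphi, phiK, bdrift, pfun]
  set S := ∑ j, z j * rfun K (z j)
  simp only [mul_sum, ← sum_sub_distrib, ← sum_add_distrib]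
  refine sum_eq_zero fun i _ => ?_
  have hpow : z i ^ m = z i ^ (m - 1) * z i := by
    simpa using Real.rpow_add_one' (hz.1 i) (by linarith : m - 1 + 1 ≠ 0)
  rw [hpow]
  linear_combination (-(m / 2) * α * z i ^ (m - 1)) * mul_rfun K (z i)

/-- For every real `m ≥ 2` and every `z ∈ Δ_K`, the generator applied to
the power sum `φ_m` satisfies the stated identity. -/
theorem stmt5 (K : ℕ) (hK : 2 ≤ K) (α θ : ℝ) (hα0 : 0 ≤ α) (hα1 : α < 1)
    (hθ : -α < θ) :
    ∀ (m : ℝ), 2 ≤ m → ∀ z ∈ DeltaK K,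
      BKphi K α θ m z =
        (m * (m - 1) / 2) * (phiK K (m - 1) z - phiK K m z)
          + (m / 2) * ((θ + α) / ((K : ℝ) - 1)) * (phiK K (m - 1) z - phiK K m z)
          - (m / 2) * (θ * phiK K m z + α * phiK K (m - 1) z)
          + (m / 2) * α * ∑ i, (1 - z i) ^ K * z i ^ (m - 1) *
              (1 - z i + (∑ j, z j * rfun K (z j)) / (∑ l, (1 - z l) ^ K)) :=
  stmt5_general K α θ
end

section
/- For every real m ≥ 2, every integer K ≥ 2, and every z ∈ ∇_K, one has |B_K φ_m(z) − [(m(m−1)/2)(φ_{m−1}(z) − φ_m(z)) − (m/2)(θ φ_m(z) + α φ_{m−1}(z))]| ≤ (m/2)·(θ+α)/(K−1) + (m/2)·α·(1+2e²)·K·((m−1)/(K+m−1))^{m−1}. In particular, for fixed ε ∈ (0,1) and m ≥ 2+ε, the supremum over z ∈ ∇_K of this difference is O(K^{−ε}) as K → ∞. -/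
open Finset

/-! The difference `B_K φ_m - B φ_m` equals `m/2` times
`(θ+α)/(K-1) · ∑ zᵢ^(m-1)(1-zᵢ) + α (∑ zⱼ rⱼ)(∑ pᵢ zᵢ^(m-1)) + α ∑ (1-zᵢ)^(K+1) zᵢ^(m-1)`,
a sum of nonnegative terms on the simplex. The first sum is at most `1`, and
`∑ zⱼ rⱼ ≤ K - 1`. The other sums are controlled by the weighted AM-GM bound
`z^a (1-z)^K ≤ (a/(a+K))^a` on `[0,1]`, together with the lower bound `K e⁻²` for the
normaliser `∑ (1-zₗ)^K` of the `pᵢ` (power-mean inequality). Finally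
`K (a/(a+K))^a ≤ a^(1+ε) K^(-ε)` when `a = m - 1 ≥ 1 + ε`. -/

open Real

lemma rpow_mul_one_sub_rpow_le {a b z : ℝ} (ha : 0 < a) (hb : 0 < b) (hz0 : 0 ≤ z)
    (hz1 : z ≤ 1) :
    z ^ a * (1 - z) ^ b ≤ (a / (a + b)) ^ a * (b / (a + b)) ^ b := by
  set w₁ := a / (a + b) with hw₁_def
  set w₂ := b / (a + b) with hw₂_def
  have hw₁ : 0 < w₁ := by positivity
  have hw₂ : 0 < w₂ := by positivity
  have hp₁ : 0 ≤ z / w₁ := by positivity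
  have hp₂ : 0 ≤ (1 - z) / w₂ := div_nonneg (by linarith) hw₂.le
  -- weighted AM-GM for `z / w₁` and `(1 - z) / w₂`, whose weighted mean is `z + (1 - z) = 1`
  have amgm : (z / w₁) ^ w₁ * ((1 - z) / w₂) ^ w₂ ≤ 1 := by
    refine (geom_mean_le_arith_mean2_weighted hw₁.le hw₂.le hp₁ hp₂ ?_).trans_eq ?_
    · rw [hw₁_def, hw₂_def]
      field_simp
    · field_simp
      ring
  have key : (z / w₁) ^ a * ((1 - z) / w₂) ^ b ≤ 1 := by
    have h := rpow_le_one (by positivity) amgm (by positivity : 0 ≤ a + b)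
    rwa [mul_rpow (by positivity) (by positivity), ← rpow_mul hp₁, ← rpow_mul hp₂,
      show w₁ * (a + b) = a by rw [hw₁_def]; field_simp,
      show w₂ * (a + b) = b by rw [hw₂_def]; field_simp] at h
  calc z ^ a * (1 - z) ^ b = w₁ ^ a * w₂ ^ b * ((z / w₁) ^ a * ((1 - z) / w₂) ^ b) := by
        rw [div_rpow hz0 hw₁.le, div_rpow (by linarith) hw₂.le]
        field_simp
    _ ≤ w₁ ^ a * w₂ ^ b := mul_le_of_le_one_right (by positivity) key

lemma rpow_mul_one_sub_pow_le {a z : ℝ} {K : ℕ} (ha : 0 < a) (hK : 0 < K) (hz0 : 0 ≤ z)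
    (hz1 : z ≤ 1) : z ^ a * (1 - z) ^ K ≤ (a / (a + K)) ^ a := by
  have hKr : (0 : ℝ) < K := by exact_mod_cast hK
  rw [← rpow_natCast]
  refine (rpow_mul_one_sub_rpow_le ha hKr hz0 hz1).trans (mul_le_of_le_one_right
    (by positivity) (rpow_le_one (by positivity) ?_ hKr.le))
  rw [div_le_one (by positivity)]
  linarith

lemma exp_neg_two_le_sub_one_div_pow {K : ℕ} (hK : 2 ≤ K) :
    exp (-2) ≤ (((K : ℝ) - 1) / K) ^ K := by
  have hK2 : (2 : ℝ) ≤ K := by exact_mod_cast hK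
  have hexp : exp (-(1 / ((K : ℝ) - 1))) ≤ ((K : ℝ) - 1) / K := by
    have hK1 : (0 : ℝ) < K - 1 := by linarith
    rw [exp_neg, inv_le_comm₀ (exp_pos _) (by positivity), inv_div]
    have h := add_one_le_exp (1 / ((K : ℝ) - 1))
    have : (K : ℝ) / (K - 1) = 1 / (K - 1) + 1 := by field_simp; ring
    linarith
  calc exp (-2) ≤ exp (K * -(1 / ((K : ℝ) - 1))) := by
        gcongr
        rw [mul_neg, neg_le_neg_iff, mul_one_div, div_le_iff₀ (by linarith)]
        linarith
    _ = exp (-(1 / ((K : ℝ) - 1))) ^ K := by rw [← exp_nat_mul]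
    _ ≤ (((K : ℝ) - 1) / K) ^ K := by gcongr

lemma mul_rfun_eq (K : ℕ) (u : ℝ) : u * rfun K u = (1 - u) - (1 - u) ^ (K + 1) := by
  unfold rfun
  split_ifs with hu
  · simp [hu]
  · field_simp
    ring

section Simplex

variable {K : ℕ} {z : Fin K → ℝ}

lemma le_one_of_mem_DeltaK (hz : z ∈ DeltaK K) (i : Fin K) : z i ≤ 1 :=
  hz.2 ▸ single_le_sum (fun j _ => hz.1 j) (mem_univ i)

lemma sum_one_sub_of_mem_DeltaK (hz : z ∈ DeltaK K) : ∑ i, (1 - z i) = K - 1 := by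
  simp [sum_sub_distrib, hz.2]

lemma mul_exp_neg_two_le_sum_one_sub_pow_of_mem_DeltaK (hz : z ∈ DeltaK K) (hK : 2 ≤ K) :
    K * exp (-2) ≤ ∑ i, (1 - z i) ^ K := by
  have hmean := pow_sum_div_card_le_sum_pow (s := univ) (f := fun i => 1 - z i)
    (fun i _ => sub_nonneg.2 (le_one_of_mem_DeltaK hz i)) (K - 1)
  rw [Nat.sub_add_cancel (by omega), card_univ, Fintype.card_fin,
    sum_one_sub_of_mem_DeltaK hz] at hmean
  refine le_trans ?_ hmean
  calc (K : ℝ) * exp (-2) ≤ K * (((K : ℝ) - 1) / K) ^ K := by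
        gcongr
        exact exp_neg_two_le_sub_one_div_pow hK
    _ = ((K : ℝ) - 1) ^ K / (K : ℝ) ^ (K - 1) := by
        have hpow : (K : ℝ) ^ K = (K : ℝ) ^ (K - 1) * K := by
          rw [← pow_succ, Nat.sub_add_cancel (by omega)]
        rw [div_pow, hpow]
        field_simp

lemma sum_rpow_mul_one_sub_le_one_of_mem_DeltaK {a : ℝ} (hz : z ∈ DeltaK K) (ha : 1 ≤ a) :
    ∑ i, z i ^ a * (1 - z i) ≤ 1 := by
  refine (sum_le_sum fun i _ => ?_).trans_eq hz.2
  calc z i ^ a * (1 - z i) ≤ z i ^ a :=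
        mul_le_of_le_one_right (rpow_nonneg (hz.1 i) a) (by linarith [hz.1 i])
    _ ≤ z i ^ (1 : ℝ) :=
        rpow_le_rpow_of_exponent_ge' (hz.1 i) (le_one_of_mem_DeltaK hz i) zero_le_one ha
    _ = z i := rpow_one _

lemma sum_mul_rfun_nonneg_of_mem_DeltaK (hz : z ∈ DeltaK K) :
    0 ≤ ∑ i, z i * rfun K (z i) := by
  refine sum_nonneg fun i _ => ?_
  rw [mul_rfun_eq, sub_nonneg]
  exact pow_le_of_le_one (sub_nonneg.2 (le_one_of_mem_DeltaK hz i)) (by linarith [hz.1 i])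
    K.succ_ne_zero

lemma sum_mul_rfun_le_of_mem_DeltaK (hz : z ∈ DeltaK K) :
    ∑ i, z i * rfun K (z i) ≤ K - 1 := by
  rw [← sum_one_sub_of_mem_DeltaK hz]
  refine sum_le_sum fun i _ => ?_
  rw [mul_rfun_eq, sub_le_self_iff]
  exact pow_nonneg (sub_nonneg.2 (le_one_of_mem_DeltaK hz i)) _

lemma sum_one_sub_pow_succ_mul_rpow_le_of_mem_DeltaK {a : ℝ} (hz : z ∈ DeltaK K) (ha : 0 < a)
    (hK : 0 < K) : ∑ i, (1 - z i) ^ (K + 1) * z i ^ a ≤ K * (a / (a + K)) ^ a := by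
  have hterm : ∀ i, (1 - z i) ^ (K + 1) * z i ^ a ≤ (a / (a + K)) ^ a := fun i => by
    have h1 : 0 ≤ 1 - z i := sub_nonneg.2 (le_one_of_mem_DeltaK hz i)
    calc (1 - z i) ^ (K + 1) * z i ^ a ≤ z i ^ a * (1 - z i) ^ K := by
          rw [mul_comm]
          exact mul_le_mul_of_nonneg_left
            (pow_le_pow_of_le_one h1 (by linarith [hz.1 i]) K.le_succ) (rpow_nonneg (hz.1 i) a)
      _ ≤ (a / (a + K)) ^ a := rpow_mul_one_sub_pow_le ha hK (hz.1 i) (le_one_of_mem_DeltaK hz i)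
  simpa using sum_le_sum fun i (_ : i ∈ univ) => hterm i

lemma sum_pfun_mul_rpow_le_of_mem_DeltaK {a : ℝ} (hz : z ∈ DeltaK K) (ha : 0 < a)
    (hK : 2 ≤ K) : ∑ i, pfun K z i * z i ^ a ≤ exp 2 * (a / (a + K)) ^ a := by
  have hD := mul_exp_neg_two_le_sum_one_sub_pow_of_mem_DeltaK hz hK
  have hDpos : 0 < ∑ i, (1 - z i) ^ K := lt_of_lt_of_le (by positivity) hD
  have hterm : ∀ i, (1 - z i) ^ K * z i ^ a ≤ (a / (a + K)) ^ a := fun i => by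
    rw [mul_comm]
    exact rpow_mul_one_sub_pow_le ha (by omega) (hz.1 i) (le_one_of_mem_DeltaK hz i)
  calc ∑ i, pfun K z i * z i ^ a = (∑ i, (1 - z i) ^ K * z i ^ a) / ∑ i, (1 - z i) ^ K := by
        simp only [pfun, sum_div, div_mul_eq_mul_div]
    _ ≤ K * (a / (a + K)) ^ a / (K * exp (-2)) := by
        refine div_le_div₀ (by positivity) ?_ (by positivity) hD
        simpa using sum_le_sum fun i (_ : i ∈ univ) => hterm i
    _ = exp 2 * (a / (a + K)) ^ a := by
        rw [exp_neg]
        field_simp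

lemma BKphi_sub_eq {α θ m : ℝ} (hz : ∀ i, 0 ≤ z i) (hm : m ≠ 0) :
    BKphi K α θ m z - ((m * (m - 1) / 2) * (phiK K (m - 1) z - phiK K m z)
        - (m / 2) * (θ * phiK K m z + α * phiK K (m - 1) z))
      = (m / 2) * ((θ + α) / ((K : ℝ) - 1) * ∑ i, z i ^ (m - 1) * (1 - z i)
        + α * ((∑ j, z j * rfun K (z j)) * ∑ i, pfun K z i * z i ^ (m - 1)
          + ∑ i, (1 - z i) ^ (K + 1) * z i ^ (m - 1))) := by
  have hpow : ∀ i, z i ^ m = z i ^ (m - 1) * z i := fun i => by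
    rw [← rpow_add_one' (hz i) (by simpa using hm), sub_add_cancel]
  unfold BKphi phiK bdrift
  set S := ∑ j, z j * rfun K (z j)
  simp only [mul_sum, ← sum_sub_distrib, ← sum_add_distrib]
  refine sum_congr rfl fun i _ => ?_
  rw [hpow i]
  linear_combination (-(m / 2) * α * z i ^ (m - 1)) * mul_rfun_eq K (z i)

lemma abs_BKphi_sub_le_of_mem_DeltaK {α θ m : ℝ} (hα : 0 ≤ α)
    (hθα : 0 ≤ θ + α) (hm : 2 ≤ m) (hK : 2 ≤ K) (hz : z ∈ DeltaK K) :
    |BKphi K α θ m z - ((m * (m - 1) / 2) * (phiK K (m - 1) z - phiK K m z)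
        - (m / 2) * (θ * phiK K m z + α * phiK K (m - 1) z))|
      ≤ (m / 2) * (θ + α) / ((K : ℝ) - 1)
        + (m / 2) * α * (1 + 2 * exp 2) * K * ((m - 1) / ((K : ℝ) + m - 1)) ^ (m - 1) := by
  have hK1 : (1 : ℝ) ≤ K - 1 := by
    have : (2 : ℝ) ≤ K := by exact_mod_cast hK
    linarith
  have hz1 := le_one_of_mem_DeltaK hz
  rw [BKphi_sub_eq hz.1 (by linarith), show (K : ℝ) + m - 1 = (m - 1) + K by ring]
  set M := ((m - 1) / ((m - 1) + K)) ^ (m - 1)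
  set T := ∑ i, z i ^ (m - 1) * (1 - z i)
  set S := ∑ j, z j * rfun K (z j)
  set P := ∑ i, pfun K z i * z i ^ (m - 1)
  set E := ∑ i, (1 - z i) ^ (K + 1) * z i ^ (m - 1)
  have hT0 : 0 ≤ T := sum_nonneg fun i _ =>
    mul_nonneg (rpow_nonneg (hz.1 i) _) (sub_nonneg.2 (hz1 i))
  have hT1 : T ≤ 1 := sum_rpow_mul_one_sub_le_one_of_mem_DeltaK hz (by linarith)
  have hS0 : 0 ≤ S := sum_mul_rfun_nonneg_of_mem_DeltaK hz
  have hS1 : S ≤ K - 1 := sum_mul_rfun_le_of_mem_DeltaK hz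
  have hP0 : 0 ≤ P := sum_nonneg fun i _ => mul_nonneg
    (div_nonneg (pow_nonneg (sub_nonneg.2 (hz1 i)) _)
      (sum_nonneg fun l _ => pow_nonneg (sub_nonneg.2 (hz1 l)) _))
    (rpow_nonneg (hz.1 i) _)
  have hP1 : P ≤ exp 2 * M := sum_pfun_mul_rpow_le_of_mem_DeltaK hz (by linarith) hK
  have hE0 : 0 ≤ E := sum_nonneg fun i _ =>
    mul_nonneg (pow_nonneg (sub_nonneg.2 (hz1 i)) _) (rpow_nonneg (hz.1 i) _)
  have hE1 : E ≤ K * M :=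
    sum_one_sub_pow_succ_mul_rpow_le_of_mem_DeltaK hz (by linarith) (by omega)
  have hSP : S * P ≤ 2 * exp 2 * (K * M) :=
    calc S * P ≤ (K - 1) * (exp 2 * M) := mul_le_mul hS1 hP1 hP0 (by linarith)
      _ ≤ 2 * exp 2 * (K * M) := by nlinarith [exp_pos 2, hP0.trans hP1]
  rw [abs_of_nonneg (by positivity)]
  calc m / 2 * ((θ + α) / (K - 1) * T + α * (S * P + E))
      ≤ m / 2 * ((θ + α) / (K - 1) * 1 + α * ((1 + 2 * exp 2) * (K * M))) := by
        gcongr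
        linarith
    _ = _ := by ring

end Simplex

lemma one_div_sub_one_le_two_mul_rpow_neg {x ε : ℝ} (hx : 2 ≤ x) (hε : ε ≤ 1) :
    1 / (x - 1) ≤ 2 * x ^ (-ε) :=
  calc 1 / (x - 1) ≤ 2 * x ^ (-1 : ℝ) := by
        rw [rpow_neg_one, div_le_iff₀ (by linarith)]
        field_simp
        linarith
    _ ≤ 2 * x ^ (-ε) := by
        gcongr
        linarith

lemma mul_div_add_rpow_le {a b x : ℝ} (hx : 0 < x) (hb : 0 ≤ b) (hba : b ≤ a) :
    x * (a / (a + x)) ^ a ≤ a ^ b * x ^ (1 - b) := by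
  have ha : 0 ≤ a := hb.trans hba
  have hq0 : 0 ≤ a / (a + x) := by positivity
  calc x * (a / (a + x)) ^ a ≤ x * (a / (a + x)) ^ b := by
        refine mul_le_mul_of_nonneg_left (rpow_le_rpow_of_exponent_ge' hq0 ?_ hb hba) hx.le
        exact div_le_one_of_le₀ (by linarith) (by positivity)
    _ ≤ x * (a / x) ^ b := by
        gcongr
        linarith
    _ = a ^ b * x ^ (1 - b) := by
        rw [div_rpow ha hx.le, rpow_sub hx, rpow_one]
        ring

theorem stmt9_general (α θ : ℝ) (hα0 : 0 ≤ α) (hθ : -α < θ) :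
    (∀ (m : ℝ), 2 ≤ m → ∀ K : ℕ, 2 ≤ K → ∀ z ∈ NablaK K,
      |BKphi K α θ m z -
          ((m * (m - 1) / 2) * (phiK K (m - 1) z - phiK K m z)
            - (m / 2) * (θ * phiK K m z + α * phiK K (m - 1) z))|
        ≤ (m / 2) * (θ + α) / ((K : ℝ) - 1)
          + (m / 2) * α * (1 + 2 * Real.exp 2) * (K : ℝ)
            * ((m - 1) / ((K : ℝ) + m - 1)) ^ (m - 1)) ∧
    (∀ ε : ℝ, 0 < ε → ε < 1 → ∀ (m : ℝ), 2 + ε ≤ m →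
      ∃ C : ℝ, ∀ K : ℕ, 2 ≤ K → ∀ z ∈ NablaK K,
        |BKphi K α θ m z -
            ((m * (m - 1) / 2) * (phiK K (m - 1) z - phiK K m z)
              - (m / 2) * (θ * phiK K m z + α * phiK K (m - 1) z))|
          ≤ C * (K : ℝ) ^ (-ε)) := by
  have hθα : 0 ≤ θ + α := by linarith
  refine ⟨fun m hm K hK z hz => abs_BKphi_sub_le_of_mem_DeltaK hα0 hθα hm hK hz.1,
    fun ε _ hε1 m hm => ⟨m * (θ + α) + m / 2 * α * (1 + 2 * exp 2) * (m - 1) ^ (1 + ε),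
      fun K hK z hz => (abs_BKphi_sub_le_of_mem_DeltaK hα0 hθα (by linarith) hK hz.1).trans ?_⟩⟩
  have hK2 : (2 : ℝ) ≤ K := by exact_mod_cast hK
  have hm0 : 0 ≤ m := by linarith
  have hfirst := one_div_sub_one_le_two_mul_rpow_neg hK2 hε1.le
  have hsecond : (K : ℝ) * ((m - 1) / ((K : ℝ) + m - 1)) ^ (m - 1)
      ≤ (m - 1) ^ (1 + ε) * (K : ℝ) ^ (-ε) := by
    rw [show (K : ℝ) + m - 1 = (m - 1) + K by ring, show -ε = 1 - (1 + ε) by ring]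
    exact mul_div_add_rpow_le (by linarith) (by linarith) (by linarith)
  calc m / 2 * (θ + α) / ((K : ℝ) - 1)
        + m / 2 * α * (1 + 2 * exp 2) * K * ((m - 1) / ((K : ℝ) + m - 1)) ^ (m - 1)
      = m / 2 * (θ + α) * (1 / ((K : ℝ) - 1))
        + m / 2 * α * (1 + 2 * exp 2) * (K * ((m - 1) / ((K : ℝ) + m - 1)) ^ (m - 1)) := by
        ring
    _ ≤ m / 2 * (θ + α) * (2 * (K : ℝ) ^ (-ε))
        + m / 2 * α * (1 + 2 * exp 2) * ((m - 1) ^ (1 + ε) * (K : ℝ) ^ (-ε)) := by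
        gcongr
    _ = _ := by ring

/-- For every real `m ≥ 2`, every integer `K ≥ 2`, and every `z ∈ ∇_K`,
`|B_K φ_m(z) − B φ_m(z)|` is bounded by the explicit quantity; in particular, for
fixed `ε ∈ (0,1)` and `m ≥ 2+ε`, the supremum over `z ∈ ∇_K` of this difference is
`O(K^{-ε})` as `K → ∞`. -/
theorem stmt9 (α θ : ℝ) (hα0 : 0 ≤ α) (hα1 : α < 1) (hθ : -α < θ) :
    (∀ (m : ℝ), 2 ≤ m → ∀ K : ℕ, 2 ≤ K → ∀ z ∈ NablaK K,
      |BKphi K α θ m z -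
          ((m * (m - 1) / 2) * (phiK K (m - 1) z - phiK K m z)
            - (m / 2) * (θ * phiK K m z + α * phiK K (m - 1) z))|
        ≤ (m / 2) * (θ + α) / ((K : ℝ) - 1)
          + (m / 2) * α * (1 + 2 * Real.exp 2) * (K : ℝ)
            * ((m - 1) / ((K : ℝ) + m - 1)) ^ (m - 1)) ∧
    (∀ ε : ℝ, 0 < ε → ε < 1 → ∀ (m : ℝ), 2 + ε ≤ m →
      ∃ C : ℝ, ∀ K : ℕ, 2 ≤ K → ∀ z ∈ NablaK K,
        |BKphi K α θ m z -
            ((m * (m - 1) / 2) * (phiK K (m - 1) z - phiK K m z)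
              - (m / 2) * (θ * phiK K m z + α * phiK K (m - 1) z))|
          ≤ C * (K : ℝ) ^ (-ε)) :=
  stmt9_general α θ hα0 hθ
end

section
/- Let N be a positive integer. For z ∈ Δ_K define z_i^* := z_i + p_i(z)·m̄(z) − z_i·m_i(z) with m_i(z) := α r_i(z)/(2N) and m̄(z) := ∑_{j=1}^K z_j m_j(z), and then z_i^{**} := z_i^* + ∑_{j≠i} z_j^* u − (K−1)u·z_i^*, where u := (θ+α)/(2N(K−1)). Then for every z ∈ Δ_K and every i ∈ {1,…,K}, |N(z_i^{**} − z_i) − b_i(z)| ≤ α(θ+α)K² / (4N(K−1)). In particular z_i^{**} = z_i + N^{−1} b_i(z) + O(N^{−2}) uniformly in z ∈ Δ_K. -/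
/-!
Because `p` sums to one, migration preserves total mass, so mutation acts on the
post-migration frequencies affinely: `z**ᵢ = z*ᵢ (1 - K u) + u`. Expanding both steps,
`N (z**ᵢ - zᵢ) - bᵢ(z)` is exactly the cross term of the two `O(1/N)` steps,
`N · (α / (2N)) · K u · (zᵢ rᵢ - pᵢ ∑ⱼ zⱼ rⱼ)`. The bracket lies in `[-K, K]`, since
`0 ≤ r ≤ K` on `[0, 1]` (Bernoulli's inequality) and `z` and `p` are probability vectors.
-/

open Finset

/-- The post-migration frequencies `z_i^* = z_i + p_i(z)·m̄(z) − z_i·m_i(z)`, where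
`m_i(z) = α r_i(z)/(2N)` and `m̄(z) = ∑_j z_j m_j(z)`. -/
noncomputable def zstar (K N : ℕ) (α : ℝ) (z : Fin K → ℝ) (i : Fin K) : ℝ :=
  z i + pfun K z i * (∑ j, z j * (α * rfun K (z j) / (2 * (N : ℝ))))
    - z i * (α * rfun K (z i) / (2 * (N : ℝ)))

/-- The post-mutation frequencies
`z_i^{**} = z_i^* + ∑_{j≠i} z_j^* u − (K−1)u·z_i^*` with `u = (θ+α)/(2N(K−1))`. -/
noncomputable def zstarstar (K N : ℕ) (α θ : ℝ) (z : Fin K → ℝ) (i : Fin K) : ℝ :=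
  zstar K N α z i
    + (∑ j ∈ Finset.univ.erase i, zstar K N α z j)
        * ((θ + α) / (2 * (N : ℝ) * ((K : ℝ) - 1)))
    - ((K : ℝ) - 1) * ((θ + α) / (2 * (N : ℝ) * ((K : ℝ) - 1))) * zstar K N α z i

lemma rfun_nonneg (K : ℕ) {u : ℝ} (h0 : 0 ≤ u) (h1 : u ≤ 1) : 0 ≤ rfun K u := by
  unfold rfun
  split_ifs
  · positivity
  · have : (1 - u) ^ K ≤ 1 := pow_le_one₀ (by linarith) (by linarith)
    exact div_nonneg (mul_nonneg (by linarith) (by linarith)) h0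

lemma rfun_le (K : ℕ) {u : ℝ} (h0 : 0 ≤ u) (h1 : u ≤ 1) : rfun K u ≤ K := by
  unfold rfun
  split_ifs with hu0
  · rfl
  · have hu : 0 < u := lt_of_le_of_ne h0 (Ne.symm hu0)
    have bernoulli : 1 - (1 - u) ^ K ≤ K * u := by
      have := one_add_mul_le_pow (by linarith : (-2 : ℝ) ≤ -u) K
      rw [← sub_eq_add_neg] at this
      linarith
    have : (1 - u) ^ K ≤ 1 := pow_le_one₀ (by linarith) (by linarith)
    rw [div_le_iff₀ hu]
    calc (1 - u) * (1 - (1 - u) ^ K) ≤ 1 * (K * u) :=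
          mul_le_mul (by linarith) bernoulli (by linarith) zero_le_one
      _ = K * u := one_mul _

namespace DeltaK

variable {K : ℕ} {z : Fin K → ℝ}

lemma le_one (hz : z ∈ DeltaK K) (i : Fin K) : z i ≤ 1 :=
  hz.2 ▸ single_le_sum (fun j _ => hz.1 j) (mem_univ i)

lemma exists_lt_one (hK : 2 ≤ K) (hz : z ∈ DeltaK K) : ∃ j, z j < 1 := by
  by_contra! h
  have : (K : ℝ) ≤ ∑ j, z j := by
    simpa using card_nsmul_le_sum univ z 1 (fun j _ => h j)
  have : (2 : ℝ) ≤ K := by exact_mod_cast hK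
  linarith [hz.2]

lemma sum_one_sub_pow_pos (hK : 2 ≤ K) (hz : z ∈ DeltaK K) :
    0 < ∑ l, (1 - z l) ^ K := by
  obtain ⟨j, hj⟩ := exists_lt_one hK hz
  exact sum_pos' (fun l _ => pow_nonneg (sub_nonneg.2 (le_one hz l)) K)
    ⟨j, mem_univ j, pow_pos (sub_pos.2 hj) K⟩

lemma pfun_nonneg (hz : z ∈ DeltaK K) (i : Fin K) : 0 ≤ pfun K z i :=
  div_nonneg (pow_nonneg (sub_nonneg.2 (le_one hz i)) K)
    (sum_nonneg fun l _ => pow_nonneg (sub_nonneg.2 (le_one hz l)) K)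

lemma pfun_le_one (hz : z ∈ DeltaK K) (i : Fin K) : pfun K z i ≤ 1 :=
  div_le_one_of_le₀
    (single_le_sum (f := fun l => (1 - z l) ^ K)
      (fun l _ => pow_nonneg (sub_nonneg.2 (le_one hz l)) K) (mem_univ i))
    (sum_nonneg fun l _ => pow_nonneg (sub_nonneg.2 (le_one hz l)) K)

lemma sum_pfun (hK : 2 ≤ K) (hz : z ∈ DeltaK K) : ∑ i, pfun K z i = 1 := by
  unfold pfun
  rw [← sum_div, div_self (sum_one_sub_pow_pos hK hz).ne']

lemma sum_mul_rfun_nonneg (hz : z ∈ DeltaK K) : 0 ≤ ∑ j, z j * rfun K (z j) :=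
  sum_nonneg fun j _ => mul_nonneg (hz.1 j) (rfun_nonneg K (hz.1 j) (le_one hz j))

lemma sum_mul_rfun_le (hz : z ∈ DeltaK K) : ∑ j, z j * rfun K (z j) ≤ K :=
  calc ∑ j, z j * rfun K (z j) ≤ ∑ j, z j * K :=
        sum_le_sum fun j _ =>
          mul_le_mul_of_nonneg_left (rfun_le K (hz.1 j) (le_one hz j)) (hz.1 j)
    _ = K := by rw [← sum_mul, hz.2, one_mul]

lemma abs_mul_rfun_sub_pfun_mul_le (hz : z ∈ DeltaK K) (i : Fin K) :
    |z i * rfun K (z i) - pfun K z i * ∑ j, z j * rfun K (z j)| ≤ K :=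
  abs_sub_le_of_nonneg_of_le
    (mul_nonneg (hz.1 i) (rfun_nonneg K (hz.1 i) (le_one hz i)))
    (by nlinarith [rfun_le K (hz.1 i) (le_one hz i), hz.1 i, le_one hz i])
    (mul_nonneg (pfun_nonneg hz i) (sum_mul_rfun_nonneg hz))
    (by nlinarith [pfun_nonneg hz i, pfun_le_one hz i, sum_mul_rfun_le hz])

end DeltaK

lemma sum_mul_migration_rate (K N : ℕ) (α : ℝ) (z : Fin K → ℝ) :
    ∑ j, z j * (α * rfun K (z j) / (2 * (N : ℝ)))
      = α * (∑ j, z j * rfun K (z j)) / (2 * N) := by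
  rw [mul_sum, sum_div]
  exact sum_congr rfl fun j _ => by ring

section Migration

variable {K N : ℕ} {α θ : ℝ} {z : Fin K → ℝ}

lemma sum_zstar (hK : 2 ≤ K) (hz : z ∈ DeltaK K) : ∑ j, zstar K N α z j = 1 := by
  unfold zstar
  rw [sum_sub_distrib, sum_add_distrib, ← sum_mul, DeltaK.sum_pfun hK hz, hz.2,
    sum_mul_migration_rate, one_mul]
  ring

lemma zstarstar_eq (hstar : ∑ j, zstar K N α z j = 1) (i : Fin K) :
    zstarstar K N α θ z i
      = zstar K N α z i + (1 - zstar K N α z i) * ((θ + α) / (2 * N * ((K : ℝ) - 1)))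
        - ((K : ℝ) - 1) * ((θ + α) / (2 * N * ((K : ℝ) - 1))) * zstar K N α z i := by
  rw [zstarstar, ← hstar, ← add_sum_erase _ _ (mem_univ i), add_sub_cancel_left]

lemma mul_sub_bdrift_eq (hK : 2 ≤ K) (hN : 0 < N) (hz : z ∈ DeltaK K) (i : Fin K) :
    (N : ℝ) * (zstarstar K N α θ z i - z i) - bdrift K α θ z i
      = α * (θ + α) * K / (4 * N * ((K : ℝ) - 1))
        * (z i * rfun K (z i) - pfun K z i * ∑ j, z j * rfun K (z j)) := by
  have hN' : (N : ℝ) ≠ 0 := by positivity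
  have hK' : (K : ℝ) - 1 ≠ 0 := by
    have : (2 : ℝ) ≤ K := by exact_mod_cast hK
    linarith
  rw [zstarstar_eq (sum_zstar hK hz), zstar, sum_mul_migration_rate, bdrift]
  field_simp
  ring

end Migration

theorem stmt14_general (K : ℕ) (hK : 2 ≤ K) (α θ : ℝ) (hα0 : 0 ≤ α)
    (hθ : -α < θ) (N : ℕ) (hN : 0 < N) :
    ∀ z ∈ DeltaK K, ∀ i : Fin K,
      |(N : ℝ) * (zstarstar K N α θ z i - z i) - bdrift K α θ z i|
        ≤ α * (θ + α) * (K : ℝ) ^ 2 / (4 * (N : ℝ) * ((K : ℝ) - 1)) := by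
  intro z hz i
  have hK1 : (1 : ℝ) < K := by exact_mod_cast hK
  have hc : 0 ≤ α * (θ + α) * K / (4 * N * ((K : ℝ) - 1)) := by
    have : 0 ≤ θ + α := by linarith
    have : 0 < (K : ℝ) - 1 := by linarith
    positivity
  rw [mul_sub_bdrift_eq hK hN hz i, abs_mul, abs_of_nonneg hc]
  calc _ ≤ α * (θ + α) * K / (4 * N * ((K : ℝ) - 1)) * K :=
        mul_le_mul_of_nonneg_left (DeltaK.abs_mul_rfun_sub_pfun_mul_le hz i) hc
    _ = _ := by ring

/-- For every `z ∈ Δ_K` and every `i`,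
`|N(z_i^{**} − z_i) − b_i(z)| ≤ α(θ+α)K²/(4N(K−1))`; in particular
`z_i^{**} = z_i + N^{-1} b_i(z) + O(N^{-2})` uniformly in `z ∈ Δ_K`. -/
theorem stmt14 (K : ℕ) (hK : 2 ≤ K) (α θ : ℝ) (hα0 : 0 ≤ α) (hα1 : α < 1)
    (hθ : -α < θ) (N : ℕ) (hN : 0 < N) :
    ∀ z ∈ DeltaK K, ∀ i : Fin K,
      |(N : ℝ) * (zstarstar K N α θ z i - z i) - bdrift K α θ z i|
        ≤ α * (θ + α) * (K : ℝ) ^ 2 / (4 * (N : ℝ) * ((K : ℝ) - 1)) :=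
  stmt14_general K hK α θ hα0 hθ N hN
end
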